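/- Let d, n ∈ ℕ with d ≥ ln(10)·2^n + 1, and consider the two-layer diagonal ReLU network h(w; x) = ReLU(w₂ᵀ ReLU(w₁ ⊙ x)) with weights w = (w₁, w₂) ∈ ℝ^d × ℝ^d, trained with the absolute loss f(w; (x,y)) = |y − h(w;x)|. Let D be the distribution under which x is uniform on {0,1}^d and y ∈ {0,1} is Bernoulli(1/4), independent of x, and let F(w) = E[f(w;(x,y))]. Define the gradient convention ∇_{w₁} f(w;z)[i] = −sign(y − h(w;x))·𝟙{w₂ᵀReLU(w₁⊙x) > 0}·w₂[i]·𝟙{w₁[i]·x[i] > 0}·x[i] and ∇_{w₂} f(w;z)[i] = −sign(y − h(w;x))·𝟙{w₂ᵀReLU(w₁⊙x) > 0}·ReLU(w₁[i]·x[i]), and set ∇F(w) = E_z[∇f(w;z)]. Then: (a) min_w F(w) = F(0) = 1/4 and F(w) − F(0) ≤ (1/2)⟨w, ∇F(w)⟩ for every w ∈ ℝ^{2d} (i.e., F is 1/2-Linearizable with respect to the minimizer 0); and (b) with probability at least 0.9 over an i.i.d. sample S of size n from D, there exists a global minimizer ŵ of the empirical loss (1/n)∑_{(x,y)∈S} f(·;(x,y))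 achieving empirical loss 0 with F(ŵ) − min_w F(w) = 1/4. -/
import Mathlib


open scoped Classical RealInnerProductSpace

/-- Instance space: `x ∈ {0,1}^d` encoded by a boolean vector, label `y ∈ {0,1}` by a boolean. -/
abbrev ZNN (d : ℕ) := (Fin d → Bool) × Bool

/-- The real value of a boolean bit. -/
noncomputable def bval (b : Bool) : ℝ := if b then 1 else 0

/-- Output of the two-layer diagonal ReLU network:
`h(w; x) = ReLU(w₂ᵀ ReLU(w₁ ⊙ x))`. -/
noncomputable def nnOut (d : ℕ)
    (w : EuclideanSpace ℝ (Fin d) × EuclideanSpace ℝ (Fin d)) (x : Fin d → Bool) : ℝ :=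
  max (∑ j, w.2 j * max (w.1 j * bval (x j)) 0) 0

/-- Absolute loss `f(w; (x,y)) = |y − h(w;x)|`. -/
noncomputable def nnLoss (d : ℕ)
    (w : EuclideanSpace ℝ (Fin d) × EuclideanSpace ℝ (Fin d)) (z : ZNN d) : ℝ :=
  |bval z.2 - nnOut d w z.1|

/-- The prescribed gradient convention for the first-layer weights. -/
noncomputable def nnGrad1 (d : ℕ)
    (w : EuclideanSpace ℝ (Fin d) × EuclideanSpace ℝ (Fin d)) (z : ZNN d) :
    EuclideanSpace ℝ (Fin d) :=
  (WithLp.equiv 2 (Fin d → ℝ)).symm fun i =>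
    -Real.sign (bval z.2 - nnOut d w z.1) *
      ((if 0 < ∑ j, w.2 j * max (w.1 j * bval (z.1 j)) 0 then (1 : ℝ) else 0) *
        (w.2 i * (if 0 < w.1 i * bval (z.1 i) then (1 : ℝ) else 0) * bval (z.1 i)))

/-- The prescribed gradient convention for the second-layer weights. -/
noncomputable def nnGrad2 (d : ℕ)
    (w : EuclideanSpace ℝ (Fin d) × EuclideanSpace ℝ (Fin d)) (z : ZNN d) :
    EuclideanSpace ℝ (Fin d) :=
  (WithLp.equiv 2 (Fin d → ℝ)).symm fun i =>
    -Real.sign (bval z.2 - nnOut d w z.1) *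
      ((if 0 < ∑ j, w.2 j * max (w.1 j * bval (z.1 j)) 0 then (1 : ℝ) else 0) *
        max (w.1 i * bval (z.1 i)) 0)

/-- Probability mass of `z = (x, y)`: `x` uniform on `{0,1}^d`, `y ∼ Bernoulli(1/4)`,
independently. -/
noncomputable def nnMass (d : ℕ) (z : ZNN d) : ℝ :=
  ((1 : ℝ)/2) ^ d * (if z.2 then (1 : ℝ)/4 else 3/4)

/-- Population loss `F(w) = E[|y − h(w;x)|]`. -/
noncomputable def nnPop (d : ℕ)
    (w : EuclideanSpace ℝ (Fin d) × EuclideanSpace ℝ (Fin d)) : ℝ :=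
  ∑ z : ZNN d, nnMass d z * nnLoss d w z

lemma ind_mul (t : ℝ) : (if 0 < t then (1:ℝ) else 0) * t = max t 0 := by
  split
  · rename_i h; rw [one_mul, max_eq_left h.le]
  · rename_i h; rw [zero_mul, eq_comm, max_eq_right (not_lt.mp h)]

lemma abs_lin (y c : ℝ) : |y - c| - |y| ≤ -Real.sign (y - c) * c := by
  rcases lt_trichotomy (y - c) 0 with h | h | h
  · rw [Real.sign_of_neg h, abs_of_neg h]
    nlinarith [le_abs_self y, neg_abs_le y]
  · have : y = c := by linarith
    subst this; simp [Real.sign]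
  · rw [Real.sign_of_pos h, abs_of_pos h]
    nlinarith [le_abs_self y]

lemma euc_inner (d : ℕ) (a b : EuclideanSpace ℝ (Fin d)) : ⟪a, b⟫ = ∑ i, a i * b i := by
  simp [PiLp.inner_apply, RCLike.inner_apply, mul_comm]

lemma nnOut_zero (d : ℕ) (x : Fin d → Bool) : nnOut d 0 x = 0 := by
  simp [nnOut]

lemma nnOut_nonneg (d : ℕ) (w) (x : Fin d → Bool) : 0 ≤ nnOut d w x := le_max_right _ _

lemma nnMass_nonneg (d : ℕ) (z : ZNN d) : 0 ≤ nnMass d z := by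
  unfold nnMass; positivity

lemma two_half_pow (d : ℕ) : (2:ℝ)^d * ((1:ℝ)/2)^d = 1 := by
  rw [← mul_pow]; norm_num

lemma bval_nonneg (b : Bool) : 0 ≤ bval b := by cases b <;> simp [bval]

lemma pop_eq (d : ℕ) (w) : nnPop d w
    = ∑ x : Fin d → Bool, ((1:ℝ)/2)^d * ((1/4) * |1 - nnOut d w x| + (3/4) * nnOut d w x) := by
  rw [nnPop, Fintype.sum_prod_type]
  refine Finset.sum_congr rfl fun x _ => ?_
  have h0 : |nnOut d w x| = nnOut d w x := abs_of_nonneg (nnOut_nonneg d w x)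
  simp [nnMass, nnLoss, bval, h0]
  ring

lemma pop_zero (d : ℕ) : nnPop d 0 = 1/4 := by
  rw [pop_eq]
  simp only [nnOut_zero]
  rw [Finset.sum_const, Finset.card_univ]
  simp only [Fintype.card_pi, Fintype.card_bool, Finset.prod_const, Finset.card_univ,
    Fintype.card_fin, nsmul_eq_mul]
  push_cast
  rw [show |(1:ℝ) - 0| = 1 by norm_num]
  rw [show ((1:ℝ)/2)^d * ((1/4) * 1 + (3/4) * 0) = ((1:ℝ)/2)^d * (1/4) by ring]
  rw [← mul_assoc, two_half_pow]; ring

lemma pop_ge (d : ℕ) (w) : 1/4 ≤ nnPop d w := by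
  rw [pop_eq]
  calc (1/4 : ℝ) = ∑ _x : Fin d → Bool, ((1:ℝ)/2)^d * (1/4) := by
        rw [Finset.sum_const, Finset.card_univ, nsmul_eq_mul]
        simp only [Fintype.card_pi, Fintype.card_bool, Finset.prod_const, Finset.card_univ,
          Fintype.card_fin]
        push_cast
        rw [← mul_assoc, two_half_pow]; ring
    _ ≤ _ := by
        refine Finset.sum_le_sum fun x _ => ?_
        have h1 := nnOut_nonneg d w x
        have h2 : 1 - nnOut d w x ≤ |1 - nnOut d w x| := le_abs_self _
        have h3 : (0:ℝ) < ((1:ℝ)/2)^d := by positivity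
        nlinarith

lemma grad_pair (d : ℕ) (w) (z : ZNN d) :
    ⟪w.1, nnGrad1 d w z⟫ + ⟪w.2, nnGrad2 d w z⟫
      = 2 * (-Real.sign (bval z.2 - nnOut d w z.1) * nnOut d w z.1) := by
  set s := -Real.sign (bval z.2 - nnOut d w z.1) with hs
  set S := ∑ j, w.2 j * max (w.1 j * bval (z.1 j)) 0 with hS
  set χ := if 0 < S then (1:ℝ) else 0 with hχ
  have hout : nnOut d w z.1 = χ * S := by
    rw [hχ, ind_mul]; rfl
  have h1 : ⟪w.1, nnGrad1 d w z⟫ = s * (χ * S) := by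
    rw [euc_inner]
    have : ∀ i, w.1 i * ((nnGrad1 d w z) i)
        = s * (χ * (w.2 i * max (w.1 i * bval (z.1 i)) 0)) := by
      intro i
      show w.1 i * (s * (χ * (w.2 i * (if 0 < w.1 i * bval (z.1 i) then (1:ℝ) else 0)
          * bval (z.1 i)))) = _
      rw [← ind_mul (w.1 i * bval (z.1 i))]
      ring
    rw [Finset.sum_congr rfl fun i _ => this i, ← Finset.mul_sum, ← Finset.mul_sum, hS]
  have h2 : ⟪w.2, nnGrad2 d w z⟫ = s * (χ * S) := by
    rw [euc_inner]
    have : ∀ i, w.2 i * ((nnGrad2 d w z) i)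
        = s * (χ * (w.2 i * max (w.1 i * bval (z.1 i)) 0)) := by
      intro i
      show w.2 i * (s * (χ * max (w.1 i * bval (z.1 i)) 0)) = _
      ring
    rw [Finset.sum_congr rfl fun i _ => this i, ← Finset.mul_sum, ← Finset.mul_sum, hS]
  rw [h1, h2, hout]; ring

lemma linzbl (d : ℕ) (w : EuclideanSpace ℝ (Fin d) × EuclideanSpace ℝ (Fin d)) :
    nnPop d w - nnPop d 0 ≤
      (1/2 : ℝ) * (⟪w.1, ∑ z : ZNN d, nnMass d z • nnGrad1 d w z⟫ +
        ⟪w.2, ∑ z : ZNN d, nnMass d z • nnGrad2 d w z⟫) := by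
  have hrhs : (1/2 : ℝ) * (⟪w.1, ∑ z : ZNN d, nnMass d z • nnGrad1 d w z⟫ +
        ⟪w.2, ∑ z : ZNN d, nnMass d z • nnGrad2 d w z⟫)
      = ∑ z : ZNN d, nnMass d z *
          (-Real.sign (bval z.2 - nnOut d w z.1) * nnOut d w z.1) := by
    rw [inner_sum, inner_sum, ← Finset.sum_add_distrib, Finset.mul_sum]
    refine Finset.sum_congr rfl fun z _ => ?_
    rw [real_inner_smul_right, real_inner_smul_right, ← mul_add, grad_pair]
    ring
  rw [hrhs, nnPop, nnPop, ← Finset.sum_sub_distrib]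
  refine Finset.sum_le_sum fun z _ => ?_
  rw [← mul_sub]
  refine mul_le_mul_of_nonneg_left ?_ (nnMass_nonneg d z)
  have : nnLoss d 0 z = |bval z.2| := by rw [nnLoss, nnOut_zero, sub_zero]
  rw [this, nnLoss]
  exact abs_lin (bval z.2) (nnOut d w z.1)

lemma out_single (d : ℕ) (i : Fin d) (x : Fin d → Bool) :
    nnOut d (EuclideanSpace.single i 1, EuclideanSpace.single i 1) x = bval (x i) := by
  rw [nnOut]
  have hsum : (∑ j, (EuclideanSpace.single i (1:ℝ)) j *
      max ((EuclideanSpace.single i (1:ℝ)) j * bval (x j)) 0) = bval (x i) := by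
    rw [Finset.sum_eq_single i]
    · simp [EuclideanSpace.single_apply, max_eq_left (bval_nonneg (x i))]
    · intro j _ hj
      simp [EuclideanSpace.single_apply, hj]
    · simp
  rw [hsum, max_eq_left (bval_nonneg (x i))]

lemma sum_bool_fun (d : ℕ) (i : Fin d) (F : Bool → ℝ) :
    ∑ x : Fin d → Bool, F (x i) = (2:ℝ)^(d-1) * (F true + F false) := by
  rw [← Equiv.sum_comp (Equiv.funSplitAt i Bool).symm (fun x => F (x i))]
  have : ∀ p : Bool × ({ j // j ≠ i } → Bool),
      F (((Equiv.funSplitAt i Bool).symm p) i) = F p.1 := by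
    intro p
    congr 1
    simp [Equiv.funSplitAt, Equiv.piSplitAt]
  rw [Finset.sum_congr rfl fun p _ => this p, Fintype.sum_prod_type]
  simp only [Finset.sum_const, Finset.card_univ, nsmul_eq_mul]
  have hcard : Fintype.card ({ j // j ≠ i } → Bool) = 2^(d-1) := by
    rw [Fintype.card_fun, Fintype.card_bool]
    congr 1
    rw [Fintype.card_subtype_compl, Fintype.card_fin, Fintype.card_subtype_eq]
  rw [Fintype.sum_bool, hcard]
  push_cast
  ring

lemma pop_single (d : ℕ) (hd1 : 1 ≤ d) (i : Fin d) :
    nnPop d (EuclideanSpace.single i 1, EuclideanSpace.single i 1) = 1/2 := by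
  rw [pop_eq]
  simp only [out_single]
  have : ∀ x : Fin d → Bool, ((1:ℝ)/2)^d * ((1/4) * |1 - bval (x i)| + (3/4) * bval (x i))
      = (fun b => ((1:ℝ)/2)^d * ((1/4) * |1 - bval b| + (3/4) * bval b)) (x i) := fun x => rfl
  rw [Finset.sum_congr rfl fun x _ => this x,
    sum_bool_fun d i (fun b => ((1:ℝ)/2)^d * ((1/4) * |1 - bval b| + (3/4) * bval b))]
  simp only [bval]
  norm_num
  have : (2:ℝ)^(d-1) * ((1:ℝ)/2)^d = 1/2 := by
    have : d = (d-1) + 1 := (Nat.succ_pred_eq_of_pos hd1).symm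
    rw [this]
    rw [pow_succ]
    rw [show (d-1+1)-1 = d-1 from rfl]
    rw [← mul_assoc]
    nlinarith [two_half_pow (d-1)]
  nlinarith [this]

def sampEquiv (d n : ℕ) : ((Fin n → Bool) × (Fin d → Fin n → Bool)) ≃ (Fin n → ZNN d) where
  toFun p := fun j => (fun i => p.2 i j, p.1 j)
  invFun S := (fun j => (S j).2, fun i j => (S j).1 i)
  left_inv p := rfl
  right_inv S := rfl

lemma mass_sum (d : ℕ) : ∑ z : ZNN d, nnMass d z = 1 := by
  rw [Fintype.sum_prod_type]
  have : ∀ x : Fin d → Bool, ∑ y : Bool, nnMass d (x, y) = ((1:ℝ)/2)^d := by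
    intro x
    rw [Fintype.sum_bool]
    simp [nnMass]
    ring
  rw [Finset.sum_congr rfl fun x _ => this x, Finset.sum_const, Finset.card_univ, nsmul_eq_mul]
  simp only [Fintype.card_pi, Fintype.card_bool, Finset.prod_const, Finset.card_univ,
    Fintype.card_fin]
  push_cast
  exact two_half_pow d

lemma total_one (d n : ℕ) : ∑ S : Fin n → ZNN d, ∏ j, nnMass d (S j) = 1 := by
  rw [← Fintype.sum_pow, mass_sum, one_pow]

lemma bad_eq (d n : ℕ) :
    ∑ S : Fin n → ZNN d, (if ¬ (∃ i : Fin d, ∀ j, (S j).1 i = (S j).2)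
        then ∏ j, nnMass d (S j) else 0)
      = (1 - ((1:ℝ)/2)^n)^d := by
  rw [← Equiv.sum_comp (sampEquiv d n)]
  rw [Fintype.sum_prod_type]
  have key : ∀ Y : Fin n → Bool, ∀ C : Fin d → Fin n → Bool,
      (if ¬ (∃ i : Fin d, ∀ j, ((sampEquiv d n (Y, C)) j).1 i = ((sampEquiv d n (Y, C)) j).2)
        then ∏ j, nnMass d ((sampEquiv d n (Y, C)) j) else 0)
      = (∏ j, (if (Y j) then (1:ℝ)/4 else 3/4)) *
          ∏ i : Fin d, (if C i ≠ Y then ((1:ℝ)/2)^n else 0) := by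
    intro Y C
    have hmass : ∏ j, nnMass d ((sampEquiv d n (Y, C)) j)
        = (∏ j, (if (Y j) then (1:ℝ)/4 else 3/4)) * ∏ i : Fin d, ((1:ℝ)/2)^n := by
      show ∏ j, (((1:ℝ)/2)^d * (if (Y j) then (1:ℝ)/4 else 3/4)) = _
      rw [Finset.prod_mul_distrib, Finset.prod_const, Finset.prod_const, Finset.card_univ,
        Finset.card_univ, Fintype.card_fin, Fintype.card_fin, ← pow_mul, ← pow_mul,
        Nat.mul_comm d n]
      ring
    have hcond : (¬ (∃ i : Fin d, ∀ j, ((sampEquiv d n (Y, C)) j).1 i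
        = ((sampEquiv d n (Y, C)) j).2)) ↔ ∀ i, C i ≠ Y := by
      show (¬ (∃ i : Fin d, ∀ j, C i j = Y j)) ↔ _
      push_neg
      refine forall_congr' fun i => ?_
      rw [Function.ne_iff]
    by_cases h : ∀ i, C i ≠ Y
    · rw [if_pos (hcond.mpr h), hmass]
      congr 1
      exact (Finset.prod_congr rfl fun i _ => by rw [if_pos (h i)]).symm
    · rw [if_neg (fun hc => h (hcond.mp hc))]
      push_neg at h
      obtain ⟨i0, hi0⟩ := h
      rw [eq_comm, Finset.prod_eq_zero (Finset.mem_univ i0)]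
      · ring
      · rw [if_neg (by simpa using hi0)]
  calc ∑ Y : Fin n → Bool, ∑ C : Fin d → Fin n → Bool,
        (if ¬ (∃ i : Fin d, ∀ j, ((sampEquiv d n (Y, C)) j).1 i = ((sampEquiv d n (Y, C)) j).2)
          then ∏ j, nnMass d ((sampEquiv d n (Y, C)) j) else 0)
      = ∑ Y : Fin n → Bool, (∏ j, (if (Y j) then (1:ℝ)/4 else 3/4)) *
          ∑ C : Fin d → Fin n → Bool, ∏ i : Fin d, (if C i ≠ Y then ((1:ℝ)/2)^n else 0) := by
        refine Finset.sum_congr rfl fun Y _ => ?_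
        rw [Finset.mul_sum]
        exact Finset.sum_congr rfl fun C _ => key Y C
    _ = ∑ Y : Fin n → Bool, (∏ j, (if (Y j) then (1:ℝ)/4 else 3/4)) * (1 - ((1:ℝ)/2)^n)^d := by
        refine Finset.sum_congr rfl fun Y _ => ?_
        congr 1
        have hpow : (∑ v : Fin n → Bool, (if v ≠ Y then ((1:ℝ)/2)^n else 0))^d
            = ∑ C : Fin d → Fin n → Bool, ∏ i : Fin d, (if C i ≠ Y then ((1:ℝ)/2)^n else 0) :=
          Fintype.sum_pow (fun v : Fin n → Bool => if v ≠ Y then ((1:ℝ)/2)^n else 0) d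
        rw [← hpow]
        have hv : ∑ v : Fin n → Bool, (if v ≠ Y then ((1:ℝ)/2)^n else 0)
            = 1 - ((1:ℝ)/2)^n := by
          have : ∀ v : Fin n → Bool, (if v ≠ Y then ((1:ℝ)/2)^n else 0)
              = ((1:ℝ)/2)^n - (if v = Y then ((1:ℝ)/2)^n else 0) := by
            intro v
            by_cases h : v = Y <;> simp [h]
          rw [Finset.sum_congr rfl fun v _ => this v, Finset.sum_sub_distrib,
            Finset.sum_ite_eq' Finset.univ Y (fun _ => ((1:ℝ)/2)^n), if_pos (Finset.mem_univ Y),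
            Finset.sum_const, Finset.card_univ, nsmul_eq_mul]
          simp only [Fintype.card_pi, Fintype.card_bool, Finset.prod_const, Finset.card_univ,
            Fintype.card_fin]
          push_cast
          nlinarith [two_half_pow n]
        rw [hv]
    _ = (1 - ((1:ℝ)/2)^n)^d := by
        rw [← Finset.sum_mul]
        have h1 : ∑ Y : Fin n → Bool, ∏ j, (if (Y j) then (1:ℝ)/4 else 3/4) = 1 := by
          have := Fintype.sum_pow (fun b : Bool => if b then (1:ℝ)/4 else 3/4) n
          rw [Fintype.sum_bool] at this
          rw [← this]
          norm_num
        rw [h1, one_mul]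

lemma num_bound (d n : ℕ) (hd : Real.log 10 * 2 ^ n + 1 ≤ (d : ℝ)) :
    (1 - ((1:ℝ)/2)^n)^d ≤ 1/10 := by
  set t := ((1:ℝ)/2)^n with ht
  have ht0 : 0 < t := by positivity
  have ht1 : t ≤ 1 := by
    rw [ht]
    exact pow_le_one₀ (by norm_num) (by norm_num)
  have h1 : 1 - t ≤ Real.exp (-t) := by
    have := Real.add_one_le_exp (-t); linarith
  have h2 : (1 - t)^d ≤ Real.exp (-t)^d := pow_le_pow_left₀ (by linarith) h1 d
  have h3 : Real.exp (-t)^d = Real.exp ((d : ℝ) * (-t)) := (Real.exp_nat_mul _ d).symm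
  have hlog : Real.log 10 ≤ (d : ℝ) * t := by
    have h5 := mul_le_mul_of_nonneg_right hd ht0.le
    have h6 : (2:ℝ)^n * t = 1 := two_half_pow n
    have h8 : (Real.log 10 * 2^n + 1) * t = Real.log 10 * ((2:ℝ)^n * t) + t := by ring
    rw [h8, h6, mul_one] at h5
    linarith
  have h4 : Real.exp ((d : ℝ) * (-t)) ≤ Real.exp (-Real.log 10) := by
    apply Real.exp_le_exp.mpr
    nlinarith
  have h7 : Real.exp (-Real.log 10) = 1/10 := by
    rw [Real.exp_neg, Real.exp_log (by norm_num : (0:ℝ) < 10)]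
    norm_num
  calc (1 - t)^d ≤ Real.exp (-t)^d := h2
    _ = Real.exp ((d : ℝ) * (-t)) := h3
    _ ≤ Real.exp (-Real.log 10) := h4
    _ = 1/10 := h7

theorem statement18' (d n : ℕ)
    (hd : Real.log 10 * 2 ^ n + 1 ≤ (d : ℝ)) :
    ((9/10 : ℝ) ≤
      ∑ S : Fin n → ZNN d,
        (if ∃ what : EuclideanSpace ℝ (Fin d) × EuclideanSpace ℝ (Fin d),
              ((n : ℝ))⁻¹ * (∑ i, nnLoss d what (S i)) = 0 ∧
              (∀ w, ((n : ℝ))⁻¹ * (∑ i, nnLoss d what (S i))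
                  ≤ ((n : ℝ))⁻¹ * (∑ i, nnLoss d w (S i))) ∧
              nnPop d what - nnPop d 0 = 1/4
          then ∏ i, nnMass d (S i) else 0)) := by
  have hlog10 : 0 < Real.log 10 := Real.log_pos (by norm_num)
  have hd1 : 1 ≤ d := by
    have h2n : (1:ℝ) ≤ 2^n := one_le_pow₀ (by norm_num)
    have : (0:ℝ) < (d:ℝ) := by nlinarith
    exact Nat.cast_pos.mp this
  have step1 : ∀ S : Fin n → ZNN d, (∃ i : Fin d, ∀ j, (S j).1 i = (S j).2) →
      (∃ what : EuclideanSpace ℝ (Fin d) × EuclideanSpace ℝ (Fin d),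
        ((n : ℝ))⁻¹ * (∑ i, nnLoss d what (S i)) = 0 ∧
        (∀ w, ((n : ℝ))⁻¹ * (∑ i, nnLoss d what (S i))
            ≤ ((n : ℝ))⁻¹ * (∑ i, nnLoss d w (S i))) ∧
        nnPop d what - nnPop d 0 = 1/4) := by
    rintro S ⟨i, hi⟩
    refine ⟨(EuclideanSpace.single i 1, EuclideanSpace.single i 1), ?_, ?_, ?_⟩
    case _ =>
      have hz : ∑ j, nnLoss d (EuclideanSpace.single i (1:ℝ), EuclideanSpace.single i (1:ℝ))
          (S j) = 0 := by
        refine Finset.sum_eq_zero fun j _ => ?_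
        rw [nnLoss, out_single, hi j, sub_self, abs_zero]
      rw [hz, mul_zero]
    case _ =>
      intro w
      have hz : ∑ j, nnLoss d (EuclideanSpace.single i (1:ℝ), EuclideanSpace.single i (1:ℝ))
          (S j) = 0 := by
        refine Finset.sum_eq_zero fun j _ => ?_
        rw [nnLoss, out_single, hi j, sub_self, abs_zero]
      rw [hz, mul_zero]
      exact mul_nonneg (inv_nonneg.mpr (Nat.cast_nonneg n))
        (Finset.sum_nonneg fun j _ => abs_nonneg _)
    case _ =>
      rw [pop_single d hd1 i, pop_zero]
      norm_num
  calc (9/10 : ℝ) ≤ 1 - (1 - ((1:ℝ)/2)^n)^d := by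
        have := num_bound d n hd
        linarith
    _ = ∑ S : Fin n → ZNN d, ((if ∃ i : Fin d, ∀ j, (S j).1 i = (S j).2
          then ∏ j, nnMass d (S j) else 0)) := by
        have hsplit : ∀ S : Fin n → ZNN d,
            (if ∃ i : Fin d, ∀ j, (S j).1 i = (S j).2 then ∏ j, nnMass d (S j) else 0)
            = ∏ j, nnMass d (S j) -
              (if ¬ (∃ i : Fin d, ∀ j, (S j).1 i = (S j).2) then ∏ j, nnMass d (S j) else 0) := by
          intro S
          by_cases h : ∃ i : Fin d, ∀ j, (S j).1 i = (S j).2 <;> simp [h]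
        rw [Finset.sum_congr rfl fun S _ => hsplit S, Finset.sum_sub_distrib, total_one,
          bad_eq]
    _ ≤ _ := by
        refine Finset.sum_le_sum fun S _ => ?_
        by_cases h : ∃ i : Fin d, ∀ j, (S j).1 i = (S j).2
        · rw [if_pos h, if_pos (step1 S h)]
        · rw [if_neg h]
          split
          · exact Finset.prod_nonneg fun j _ => nnMass_nonneg d (S j)
          · exact le_refl _

theorem statement18 (d n : ℕ)
    (hd : Real.log 10 * 2 ^ n + 1 ≤ (d : ℝ)) :
    -- (a) `min_w F(w) = F(0) = 1/4`, and `F` is 1/2-Linearizable w.r.t. the minimizer 0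
    nnPop d 0 = 1/4 ∧
    (∀ w, nnPop d 0 ≤ nnPop d w) ∧
    (∀ w : EuclideanSpace ℝ (Fin d) × EuclideanSpace ℝ (Fin d),
      nnPop d w - nnPop d 0 ≤
        (1/2 : ℝ) * (⟪w.1, ∑ z : ZNN d, nnMass d z • nnGrad1 d w z⟫ +
          ⟪w.2, ∑ z : ZNN d, nnMass d z • nnGrad2 d w z⟫)) ∧
    -- (b) with probability at least 0.9 over an i.i.d. sample of size n, some global
    -- empirical risk minimizer has empirical loss 0 and excess population risk 1/4
    ((9/10 : ℝ) ≤
      ∑ S : Fin n → ZNN d,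
        (if ∃ what : EuclideanSpace ℝ (Fin d) × EuclideanSpace ℝ (Fin d),
              ((n : ℝ))⁻¹ * (∑ i, nnLoss d what (S i)) = 0 ∧
              (∀ w, ((n : ℝ))⁻¹ * (∑ i, nnLoss d what (S i))
                  ≤ ((n : ℝ))⁻¹ * (∑ i, nnLoss d w (S i))) ∧
              nnPop d what - nnPop d 0 = 1/4
          then ∏ i, nnMass d (S i) else 0)) := by
  exact ⟨pop_zero d, fun w => by rw [pop_zero]; exact pop_ge d w, linzbl d,
    statement18' d n hd⟩
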